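/- Let p ∈ ℕ, x ∈ ℝ, r > 0, Λ ≥ 0, S a finite index set, and for each I ∈ S let x_I ∈ ℝ be a node and ψ_I ∈ ℝ a shape-function value such that: (reproduction) Σ_{I∈S} ψ_I·(x_I − x)^k equals 1 if k = 0 and equals 0 for 1 ≤ k ≤ p; (locality) x_I ∈ [x − r, x + r] whenever ψ_I ≠ 0; and (stability) Σ_{I∈S} |ψ_I| ≤ Λ. Then for every function u : ℝ → ℝ that is (p+1)-times continuously differentiable on [x − r, x + r], |Σ_{I∈S} ψ_I·u(x_I) − u(x)| ≤ Λ · (r^{p+1}/(p+1)!) · sup_{t ∈ [x−r, x+r]} |u^{(p+1)}(t)|. -/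

import Mathlib

/-!
Taylor-expand `u` to order `p` about `x`. Since the shape functions reproduce polynomials of
degree `p`, they reproduce the Taylor polynomial exactly, so the interpolation error is the
`ψ`-weighted sum of the Taylor remainders at the nodes. By locality each node lies within `r`
of `x`, so the Lagrange form bounds each remainder by `r^{p+1}/(p+1)! · sup |u^{(p+1)}|`, and
stability bounds the total weight by `Λ`.
-/

open Set Finset Nat

section IteratedDerivWithin

variable {𝕜 F : Type*} [NontriviallyNormedField 𝕜] [NormedAddCommGroup F] [NormedSpace 𝕜 F]
  {f : 𝕜 → F} {s t : Set 𝕜} {x : 𝕜}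

theorem iteratedDerivWithin_subset {n : ℕ} (st : s ⊆ t) (hs : UniqueDiffOn 𝕜 s)
    (ht : UniqueDiffOn 𝕜 t) (h : ContDiffOn 𝕜 n f t) (hx : x ∈ s) :
    iteratedDerivWithin n f s x = iteratedDerivWithin n f t x := by
  simp only [iteratedDerivWithin, iteratedFDerivWithin_subset st hs ht h hx]

end IteratedDerivWithin

section Taylor

variable {E : Type*} [NormedAddCommGroup E] [NormedSpace ℝ E]

theorem taylorWithinEval_subset {f : ℝ → E} {n : ℕ} {s t : Set ℝ} {x₀ : ℝ} (st : s ⊆ t)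
    (hs : UniqueDiffOn ℝ s) (ht : UniqueDiffOn ℝ t) (h : ContDiffOn ℝ n f t) (hx₀ : x₀ ∈ s)
    (x : ℝ) : taylorWithinEval f n s x₀ x = taylorWithinEval f n t x₀ x := by
  simp only [taylor_within_apply]
  refine Finset.sum_congr rfl fun k hk => ?_
  have hkn : (k : ℕ∞) ≤ n := mod_cast Nat.lt_succ_iff.mp (Finset.mem_range.mp hk)
  rw [iteratedDerivWithin_subset st hs ht (h.of_le (mod_cast hkn)) hx₀]

/-- Unlike in `taylor_mean_remainder_lagrange`, the Taylor polynomial and the derivative are taken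
within a fixed interval `[a, b]` rather than within `uIcc x y`, so that they do not depend on `y`. -/
theorem taylor_mean_remainder_lagrange_Icc {u : ℝ → ℝ} {a b x y : ℝ} {n : ℕ} (hxy : x ≠ y)
    (hx : x ∈ Icc a b) (hy : y ∈ Icc a b) (hu : ContDiffOn ℝ (n + 1 : ℕ) u (Icc a b)) :
    ∃ c ∈ Ioo a b, u y - taylorWithinEval u n (Icc a b) x y =
      iteratedDerivWithin (n + 1) u (Icc a b) c * (y - x) ^ (n + 1) / (n + 1)! := by
  have hsub : uIcc x y ⊆ Icc a b := uIcc_subset_Icc hx hy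
  have hab : a < b := by
    rcases lt_or_gt_of_ne hxy with h | h
    · exact hx.1.trans_lt (h.trans_le hy.2)
    · exact hy.1.trans_lt (h.trans_le hx.2)
  obtain ⟨c, hc, hrem⟩ := taylor_mean_remainder_lagrange_iteratedDeriv hxy (hu.mono hsub)
  have hcab : c ∈ Ioo a b := ⟨(le_min hx.1 hy.1).trans_lt hc.1, hc.2.trans_le (max_le hx.2 hy.2)⟩
  refine ⟨c, hcab, ?_⟩
  rw [← taylorWithinEval_subset hsub (uniqueDiffOn_uIcc hxy) (uniqueDiffOn_Icc hab)
      (hu.of_le (mod_cast n.le_succ)) left_mem_uIcc, hrem,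
    iteratedDerivWithin_eq_iteratedDeriv (uniqueDiffOn_Icc hab)
      (hu.contDiffAt (Icc_mem_nhds hcab.1 hcab.2)) (Ioo_subset_Icc_self hcab)]

theorem abs_sub_taylorWithinEval_le {u : ℝ → ℝ} {a b x y C : ℝ} {n : ℕ}
    (hu : ContDiffOn ℝ (n + 1 : ℕ) u (Icc a b)) (hx : x ∈ Icc a b) (hy : y ∈ Icc a b)
    (hC : ∀ t ∈ Icc a b, |iteratedDerivWithin (n + 1) u (Icc a b) t| ≤ C) :
    |u y - taylorWithinEval u n (Icc a b) x y| ≤ C * |y - x| ^ (n + 1) / (n + 1)! := by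
  rcases eq_or_ne x y with rfl | hxy
  · simp [taylorWithinEval_self]
  obtain ⟨c, hc, hrem⟩ := taylor_mean_remainder_lagrange_Icc hxy hx hy hu
  rw [hrem, abs_div, abs_mul, abs_pow, Nat.abs_cast]
  gcongr
  exact hC c (Ioo_subset_Icc_self hc)

end Taylor

theorem sum_mul_taylorWithinEval_eq {ι : Type*} {S : Finset ι} {p : ℕ} {x : ℝ} {xI ψ : ι → ℝ}
    (hrep : ∀ k : ℕ, k ≤ p → (∑ I ∈ S, ψ I * (xI I - x) ^ k) = if k = 0 then 1 else 0)
    (f : ℝ → ℝ) (s : Set ℝ) :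
    ∑ I ∈ S, ψ I * taylorWithinEval f p s x (xI I) = f x := by
  calc ∑ I ∈ S, ψ I * taylorWithinEval f p s x (xI I)
      = ∑ k ∈ range (p + 1), (∑ I ∈ S, ψ I * (xI I - x) ^ k) *
          ((k ! : ℝ)⁻¹ * iteratedDerivWithin k f s x) := by
        simp only [taylor_within_apply, smul_eq_mul, Finset.mul_sum, Finset.sum_mul]
        exact Finset.sum_comm.trans
          (Finset.sum_congr rfl fun k _ => Finset.sum_congr rfl fun I _ => by ring)
    _ = ∑ k ∈ range (p + 1), if k = 0 then f x else 0 := by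
        refine Finset.sum_congr rfl fun k hk => ?_
        rw [hrep k (Nat.lt_succ_iff.mp (Finset.mem_range.mp hk))]
        split_ifs with hk0
        · simp [hk0]
        · simp
    _ = f x := by simp

theorem abs_sum_mul_le_of_abs_le {ι : Type*} {S : Finset ι} {ψ e : ι → ℝ} {B Λ : ℝ}
    (hB : 0 ≤ B) (he : ∀ I ∈ S, ψ I ≠ 0 → |e I| ≤ B) (hψ : ∑ I ∈ S, |ψ I| ≤ Λ) :
    |∑ I ∈ S, ψ I * e I| ≤ Λ * B := by
  calc |∑ I ∈ S, ψ I * e I| ≤ ∑ I ∈ S, |ψ I| * B := by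
        refine (Finset.abs_sum_le_sum_abs _ _).trans (Finset.sum_le_sum fun I hI => ?_)
        rw [abs_mul]
        by_cases hψI : ψ I = 0
        · simp [hψI]
        · exact mul_le_mul_of_nonneg_left (he I hI hψI) (abs_nonneg _)
    _ ≤ Λ * B := by rw [← Finset.sum_mul]; exact mul_le_mul_of_nonneg_right hψ hB

theorem stmt_11_general {ι : Type*} (S : Finset ι) (p : ℕ) (x r Λ : ℝ) (hr : 0 < r)
    (xI : ι → ℝ) (ψ : ι → ℝ)
    (hrep : ∀ k : ℕ, k ≤ p →
      (∑ I ∈ S, ψ I * (xI I - x) ^ k) = if k = 0 then 1 else 0)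
    (hloc : ∀ I ∈ S, ψ I ≠ 0 → xI I ∈ Set.Icc (x - r) (x + r))
    (hstab : ∑ I ∈ S, |ψ I| ≤ Λ) :
    ∀ u : ℝ → ℝ, ContDiffOn ℝ (p + 1 : ℕ) u (Set.Icc (x - r) (x + r)) →
      |(∑ I ∈ S, ψ I * u (xI I)) - u x| ≤
        Λ * (r ^ (p + 1) / ((p + 1).factorial : ℝ)) *
          sSup ((fun t => |iteratedDerivWithin (p + 1) u (Set.Icc (x - r) (x + r)) t|) ''
            Set.Icc (x - r) (x + r)) := by
  intro u hu
  set s := Icc (x - r) (x + r)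
  set M := sSup ((fun t => |iteratedDerivWithin (p + 1) u s t|) '' s)
  have hxs : x ∈ s := ⟨by linarith, by linarith⟩
  have hM : ∀ t ∈ s, |iteratedDerivWithin (p + 1) u s t| ≤ M := fun t ht =>
    (hu.continuousOn_iteratedDerivWithin le_rfl (uniqueDiffOn_Icc (by linarith))).abs
      |>.le_sSup_image_Icc ht
  have hnode : ∀ I ∈ S, ψ I ≠ 0 →
      |u (xI I) - taylorWithinEval u p s x (xI I)| ≤ r ^ (p + 1) / (p + 1)! * M := by
    intro I hI hψ
    have hdist : |xI I - x| ≤ r := abs_sub_le_iff.mpr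
      ⟨by linarith [(hloc I hI hψ).2], by linarith [(hloc I hI hψ).1]⟩
    calc _ ≤ M * |xI I - x| ^ (p + 1) / (p + 1)! :=
          abs_sub_taylorWithinEval_le hu hxs (hloc I hI hψ) hM
      _ ≤ M * r ^ (p + 1) / (p + 1)! := by
          gcongr
          exact (abs_nonneg _).trans (hM x hxs)
      _ = r ^ (p + 1) / (p + 1)! * M := by ring
  calc |(∑ I ∈ S, ψ I * u (xI I)) - u x|
      = |∑ I ∈ S, ψ I * (u (xI I) - taylorWithinEval u p s x (xI I))| := by
        simp only [mul_sub, Finset.sum_sub_distrib, sum_mul_taylorWithinEval_eq hrep]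
    _ ≤ Λ * (r ^ (p + 1) / (p + 1)! * M) :=
        abs_sum_mul_le_of_abs_le (by positivity [(abs_nonneg _).trans (hM x hxs)]) hnode hstab
    _ = _ := by ring

/-- Pointwise `O(r^{p+1})` estimate for shape functions reproducing
polynomials of degree `p`: if the values `ψ I` reproduce the monomials `(x_I − x)^k`
(`1` for `k = 0`, `0` for `1 ≤ k ≤ p`), are supported in `[x−r, x+r]`, and have total mass
at most `Λ`, then for every `(p+1)`-times continuously differentiable `u`,
`|∑ ψ I · u(x_I) − u(x)| ≤ Λ·(r^{p+1}/(p+1)!)·sup |u^{(p+1)}|`. -/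
theorem stmt_11 {ι : Type*} (S : Finset ι) (p : ℕ) (x r Λ : ℝ) (hr : 0 < r) (hΛ : 0 ≤ Λ)
    (xI : ι → ℝ) (ψ : ι → ℝ)
    (hrep : ∀ k : ℕ, k ≤ p →
      (∑ I ∈ S, ψ I * (xI I - x) ^ k) = if k = 0 then 1 else 0)
    (hloc : ∀ I ∈ S, ψ I ≠ 0 → xI I ∈ Set.Icc (x - r) (x + r))
    (hstab : ∑ I ∈ S, |ψ I| ≤ Λ) :
    ∀ u : ℝ → ℝ, ContDiffOn ℝ (p + 1 : ℕ) u (Set.Icc (x - r) (x + r)) →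
      |(∑ I ∈ S, ψ I * u (xI I)) - u x| ≤
        Λ * (r ^ (p + 1) / ((p + 1).factorial : ℝ)) *
          sSup ((fun t => |iteratedDerivWithin (p + 1) u (Set.Icc (x - r) (x + r)) t|) ''
            Set.Icc (x - r) (x + r)) :=
  stmt_11_general S p x r Λ hr xI ψ hrep hloc hstab
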